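/- arXiv:2507.20276 — 7 statements merged into one kernel-verified Lean document; each statement's English description precedes it below -/
import Mathlib

section
/- Let L be a DG-Lie algebra over a field of characteristic 0, A a local Artinian algebra with maximal ideal m_A, and x ∈ L^1 ⊗ m_A a Maurer–Cartan element. Then the subset I(x) = { dν + [x,ν] : ν ∈ L^{-1} ⊗ m_A } is a Lie subalgebra of L^0 ⊗ m_A, i.e. it is closed under addition, scalar multiplication, and the Lie bracket. -/
/-!
STATEMENT 1. Let `L` be a DG-Lie algebra over a field of characteristic 0, `A` a local
Artinian algebra with maximal ideal `m_A`, and `x ∈ L¹ ⊗ m_A` a Maurer–Cartan element.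
Then the subset `I(x) = { dν + [x,ν] : ν ∈ L⁻¹ ⊗ m_A }` is a Lie subalgebra of
`L⁰ ⊗ m_A`: it is closed under addition, scalar multiplication, and the Lie bracket.

As in the other files, `L ⊗ m_A` is itself a DG-Lie algebra, so we state the result for an
arbitrary DG-Lie algebra (graded by submodules of a `K`-vector space) and a Maurer–Cartan
element `x` of degree `1`.
-/

/-- The sign `(-1)^n` for `n : ℤ`. -/
def sgn (n : ℤ) : ℤ := if Even n then 1 else -1

/-- A ℤ-graded differential graded Lie algebra over a field `K`. -/
structure DGLA (K : Type*) (V : Type*) [Field K] [AddCommGroup V] [Module K V] where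
  grade : ℤ → Submodule K V
  bracket : V →ₗ[K] V →ₗ[K] V
  D : V →ₗ[K] V
  bracket_grade : ∀ {i j : ℤ} (x y : V), x ∈ grade i → y ∈ grade j →
    bracket x y ∈ grade (i + j)
  D_grade : ∀ {i : ℤ} (x : V), x ∈ grade i → D x ∈ grade (i + 1)
  D_sq : ∀ x : V, D (D x) = 0
  antisymm : ∀ {i j : ℤ} (x y : V), x ∈ grade i → y ∈ grade j →
    bracket x y = - (sgn (i * j) • bracket y x)
  jacobi : ∀ {i j : ℤ} (x y z : V), x ∈ grade i → y ∈ grade j →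
    bracket x (bracket y z) = bracket (bracket x y) z + sgn (i * j) • bracket y (bracket x z)
  leibniz : ∀ {i : ℤ} (x y : V), x ∈ grade i →
    D (bracket x y) = bracket (D x) y + sgn i • bracket x (D y)

/-- The set `I(x) = { dν + [x,ν] : ν of degree −1 }` consists of elements of degree `0` and is
closed under addition, scalar multiplication and the Lie bracket, i.e. it is a Lie subalgebra
of `L⁰`. -/
theorem stmt_1 {K V : Type*} [Field K] [CharZero K] [AddCommGroup V] [Module K V]
    (L : DGLA K V) (x : V) (hx : x ∈ L.grade 1)
    (hMC : L.D x + (2 : K)⁻¹ • L.bracket x x = 0) :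
    let I : Set V := {a | ∃ ν ∈ L.grade (-1), a = L.D ν + L.bracket x ν}
    (∀ a ∈ I, a ∈ L.grade 0) ∧
    (∀ a ∈ I, ∀ b ∈ I, a + b ∈ I) ∧
    (∀ (c : K), ∀ a ∈ I, c • a ∈ I) ∧
    (∀ a ∈ I, ∀ b ∈ I, L.bracket a b ∈ I) := by
  intro I
  have sgn1 : sgn 1 = -1 := by norm_num [sgn]
  have sgn0 : sgn 0 = 1 := by norm_num [sgn]
  -- every element of I has degree 0
  have hdeg : ∀ a ∈ I, a ∈ L.grade 0 := by
    rintro a ⟨ν, hν, rfl⟩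
    have h1 : L.D ν ∈ L.grade 0 := by
      have := L.D_grade ν hν; simpa using this
    have h2 : L.bracket x ν ∈ L.grade 0 := by
      have := L.bracket_grade x ν hx hν; simpa using this
    exact (L.grade 0).add_mem h1 h2
  -- the twisted differential squares to zero on degree -1 elements
  have hclosed : ∀ ν ∈ L.grade (-1),
      L.D (L.D ν + L.bracket x ν) + L.bracket x (L.D ν + L.bracket x ν) = 0 := by
    intro ν hν
    have hle : L.D (L.bracket x ν)
        = L.bracket (L.D x) ν + sgn 1 • L.bracket x (L.D ν) := L.leibniz x ν hx
    rw [sgn1] at hle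
    have hja : L.bracket x (L.bracket x ν)
        = L.bracket (L.bracket x x) ν + sgn (1 * 1) • L.bracket x (L.bracket x ν) :=
      L.jacobi x x ν hx hx
    rw [show (1 : ℤ) * 1 = 1 by ring, sgn1] at hja
    have hja' : L.bracket x (L.bracket x ν) + L.bracket x (L.bracket x ν)
        = L.bracket (L.bracket x x) ν := by
      have h := hja
      simp only [neg_smul, one_smul, ← sub_eq_add_neg] at h
      exact eq_sub_iff_add_eq.mp h
    have hw : L.bracket x (L.bracket x ν)
        = (2 : K)⁻¹ • L.bracket (L.bracket x x) ν := by
      rw [← hja', ← two_smul K, smul_smul]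
      norm_num
    have hDx : L.D x = -((2 : K)⁻¹ • L.bracket x x) := by
      exact eq_neg_of_add_eq_zero_left hMC
    have hDxν : L.bracket (L.D x) ν
        = -((2 : K)⁻¹ • L.bracket (L.bracket x x) ν) := by
      rw [hDx]
      simp [map_neg, map_smul]
    rw [map_add, map_add, L.D_sq, hle, hDxν, hw]
    abel
  -- the key computation: for a ∈ I (so d_x a = 0), [a, d_x μ] = d_x [a, μ]
  refine ⟨hdeg, ?_, ?_, ?_⟩
  · rintro a ⟨ν, hν, rfl⟩ b ⟨μ, hμ, rfl⟩
    refine ⟨ν + μ, (L.grade (-1)).add_mem hν hμ, ?_⟩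
    simp only [map_add]
    abel
  · rintro c a ⟨ν, hν, rfl⟩
    refine ⟨c • ν, (L.grade (-1)).smul_mem c hν, ?_⟩
    simp [map_smul, smul_add]
  · rintro a ha b ⟨μ, hμ, rfl⟩
    have ha0 : a ∈ L.grade 0 := hdeg a ha
    obtain ⟨ν, hν, rfl⟩ := ha
    set a := L.D ν + L.bracket x ν with ha_def
    refine ⟨L.bracket a μ, by simpa using L.bracket_grade a μ ha0 hμ, ?_⟩
    have hle : L.D (L.bracket a μ)
        = L.bracket (L.D a) μ + sgn 0 • L.bracket a (L.D μ) := L.leibniz a μ ha0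
    rw [sgn0, one_smul] at hle
    have hja : L.bracket x (L.bracket a μ)
        = L.bracket (L.bracket x a) μ + sgn (1 * 0) • L.bracket a (L.bracket x μ) :=
      L.jacobi x a μ hx ha0
    rw [show (1 : ℤ) * 0 = 0 by ring, sgn0, one_smul] at hja
    have hz : L.D a + L.bracket x a = 0 := hclosed ν hν
    have hDa : L.D a = -(L.bracket x a) := by exact eq_neg_of_add_eq_zero_left hz
    rw [hle, hja, hDa]
    simp only [map_neg, LinearMap.neg_apply, map_add]
    abel
end

section
/- Let M = L ⊕ E^*[-1] be the cocone DG-Lie algebra of evaluation at s, and A local Artinian with maximal ideal m_A. A pair (u,t) ∈ M^1 ⊗ m_A (with u ∈ L^1 ⊗ m_A, t ∈ E^0 ⊗ m_A) satisfies the Maurer–Cartan equation of M if and only if (∂+u)^2 = 0; in particular the Maurer–Cartan condition imposes no constraint on t. -/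
/-!
STATEMENT 8. Let `M = L ⊕ E^*[-1]` be the cocone DG-Lie algebra of evaluation at `s`, and
`A` local Artinian with maximal ideal `m_A`.  A pair `(u,t) ∈ M¹ ⊗ m_A` (with
`u ∈ L¹ ⊗ m_A`, `t ∈ E^0 ⊗ m_A`) satisfies the Maurer–Cartan equation of `M` if and only
if `(∂+u)^2 = 0`; in particular the Maurer–Cartan condition imposes no constraint on `t`.

Here the vanishing `E^i = 0` for `i > 0` is essential: the `E`-component of the
Maurer–Cartan equation lives in `E^1 = 0`.  We model the complex `E^*` concentrated in
nonpositive degrees by `E n := E^{-n}` for `n : ℕ`, with differentials `d n : E^{-(n+1)} →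
E^{-n}`, and model `E^1` by a module `Eplus` which is a `Subsingleton` (i.e. zero).  A
degree-one endomorphism `u` has components `u n : E^{-(n+1)} → E^{-n}` together with
`u0 : E^0 → E^1 = Eplus`.  The Maurer–Cartan equation `d(u,t) + ½[(u,t),(u,t)] = 0` of the
cocone has components: `∂u + u∂ + u² = 0` in `Hom²` (the last `Hom`-component landing in
`Eplus`) and `∂t + u(s) + u(t) = 0` in `E^1 = Eplus`; the latter two are automatic since
`Eplus` is trivial, and the statement is the equivalence with `(∂+u)² = 0` — a condition
not involving `t`.
-/

theorem stmt_8 {R : Type*} [CommRing R]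
    (E : ℕ → Type*) [∀ n, AddCommGroup (E n)] [∀ n, Module R (E n)]
    (Eplus : Type*) [AddCommGroup Eplus] [Module R Eplus] [Subsingleton Eplus]
    (d : ∀ n, E (n + 1) →ₗ[R] E n) (d0 : E 0 →ₗ[R] Eplus)
    (hd : ∀ n, (d n).comp (d (n + 1)) = 0)
    (s t : E 0)
    (u : ∀ n, E (n + 1) →ₗ[R] E n) (u0 : E 0 →ₗ[R] Eplus) :
    -- Maurer–Cartan equation of the cocone `M` for `(u, t)` ↔ `(∂+u)² = 0`
    (((∀ n, (d n).comp (u (n + 1)) + (u n).comp (d (n + 1)) + (u n).comp (u (n + 1)) = 0) ∧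
       (d0.comp (u 0) + u0.comp (d 0) + u0.comp (u 0) = 0) ∧
       (d0 t + u0 s + u0 t = 0))
      ↔ (∀ n, (d n + u n).comp (d (n + 1) + u (n + 1)) = 0)) := by
  have key : ∀ n, (d n + u n).comp (d (n + 1) + u (n + 1)) =
      (d n).comp (u (n + 1)) + (u n).comp (d (n + 1)) + (u n).comp (u (n + 1)) := by
    intro n
    have := hd n
    ext x
    simp only [LinearMap.add_comp, LinearMap.comp_add, LinearMap.add_apply, LinearMap.comp_apply]
    have h0 : d n (d (n + 1) x) = 0 := by
      have := congrArg (fun f => f x) (hd n); simpa using this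
    rw [h0]; abel
  constructor
  · rintro ⟨h, -, -⟩ n
    rw [key n, h n]
  · intro h
    refine ⟨fun n => by rw [← key n, h n], Subsingleton.elim _ _, Subsingleton.elim _ _⟩
end

section
/- As a consequence, if (u',t') = e^{(f,a)} ∗ (u,t) for Maurer–Cartan elements in the cocone DG-Lie algebra M, then the classes of s+t' and e^f(s+t) agree in the cohomology H^0(E^* ⊗ A, ∂+u'), and there exists b ∈ E^{-1} ⊗ m_A such that e^{(0,b)} e^{(f,a)} ∗ (u,t) = (u', e^f(s+t) − s). -/
/-!
STATEMENT 11. As a consequence of the previous lemma, if `(u',t') = e^{(f,a)} ∗ (u,t)` for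
Maurer–Cartan elements in the cocone DG-Lie algebra `M`, then the classes of `s+t'` and
`e^f(s+t)` agree in the cohomology `H^0(E^* ⊗ A, ∂+u')` (i.e. their difference is a
coboundary, an element of the image of `∂+u'` on `E^{-1} ⊗ m_A`), and there exists
`b ∈ E^{-1} ⊗ m_A` such that `e^{(0,b)} e^{(f,a)} ∗ (u,t) = (u', e^f(s+t) − s)`.

Model as in the previous file: `M = End_K(E) × E`, gauge action given by the truncated
series (stable for truncation length `m ≥ 2N + 1`, where `f ^ N = 0`).
-/

namespace Stmt11

/-- The sign `(-1)^n` for `n : ℤ`. -/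
def sgn (n : ℤ) : ℤ := if Even n then 1 else -1

variable {K E : Type*} [Field K] [CharZero K] [AddCommGroup E] [Module K E]

/-- Bracket of `M = End(E) ⊕ E[-1]` (degree tags `a`, `b`). -/
def br (a b : ℤ) (p q : Module.End K E × E) : Module.End K E × E :=
  (p.1 * q.1 - sgn (a * b) • (q.1 * p.1), p.1 q.2 - sgn (a * b) • q.1 p.2)

/-- Differential of `M` on elements of degree `a`. -/
def dM (D : Module.End K E) (s : E) (a : ℤ) (p : Module.End K E × E) :
    Module.End K E × E :=
  (D * p.1 - sgn a • (p.1 * D), D p.2 - sgn a • p.1 s)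

/-- The gauge action of a degree-0 element on a degree-1 element, truncated at `m`. -/
def gaugeM (m : ℕ) (D : Module.End K E) (s : E) (a p : Module.End K E × E) :
    Module.End K E × E :=
  p + ∑ n ∈ Finset.range m, ((n + 1).factorial : K)⁻¹ •
      ((fun y => br 0 1 a y)^[n] (br 0 1 a p - dM D s 0 a))

/-- Truncated exponential `e^f = Σ_{n<m} f^n/n!`. -/
def expo (m : ℕ) (f : Module.End K E) : Module.End K E :=
  ∑ n ∈ Finset.range m, ((n.factorial : K)⁻¹) • f ^ n

/-
Identify `(x, y) ∈ End(E) × E` with the endomorphism `[[x, y], [0, 0]]` of `E × K`. This turns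
`br 0 1 (f, a)` into the commutator with `F = [[f, a], [0, 0]]` and `dM D s 0` into the commutator
with `[[D, s], [0, 0]]`, so on `Y = (u, t) + (D, s)` the gauge action becomes
`Y ↦ e^{ad F} Y = e^F Y e^{-F}`; as `f` is nilpotent, all truncated series are exact.
Since `e^F = [[e^f, P a], [0, 1]]` with `P = (e^f - 1)/f`, the `E`-column of `Y' e^F = e^F Y`
reads `s + t' + (D + u') (P a) = e^f (s + t)`. Both claims follow with `b = -P a`, because
gauging by `(0, b)` sends `(u', t')` to `(u', t' - (D + u') b)`.
-/

open Finset
open IsNilpotent (exp)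

section Conjugation

variable {A : Type*} [Ring A] [Algebra ℚ A]

def ad (a : A) : Module.End ℚ A := LinearMap.mulLeft ℚ a - LinearMap.mulRight ℚ a

theorem ad_apply (a y : A) : ad a y = a * y - y * a := rfl

theorem ad_eq_mulLeft_add_mulRight_neg (a : A) :
    ad a = LinearMap.mulLeft ℚ a + LinearMap.mulRight ℚ (-a) := by
  ext y
  simp [ad_apply, sub_eq_add_neg]

theorem ad_pow_eq_zero {a : A} {k : ℕ} (ha : a ^ (k + 1) = 0) : ad a ^ (2 * k + 1) = 0 := by
  rw [ad_eq_mulLeft_add_mulRight_neg]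
  refine (LinearMap.commute_mulLeft_right a (-a)).add_pow_eq_zero_of_add_le_succ_of_pow_eq_zero
    (m := k + 1) (n := k + 1) ?_ ?_ (by omega)
  · simp [LinearMap.pow_mulLeft, ha]
  · rw [LinearMap.pow_mulRight, neg_pow, ha, mul_zero]
    exact LinearMap.mulRight_zero_eq_zero ℚ A

theorem exp_mulLeft {a : A} (ha : IsNilpotent a) :
    exp (LinearMap.mulLeft ℚ a) = LinearMap.mulLeft ℚ (exp a) :=
  (IsNilpotent.map_exp ha (Algebra.lmul ℚ A)).symm

theorem exp_mulRight {a : A} (ha : IsNilpotent a) :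
    exp (LinearMap.mulRight ℚ a) = LinearMap.mulRight ℚ (exp a) := by
  obtain ⟨k, hk⟩ := ha
  have hR : LinearMap.mulRight ℚ a ^ k = 0 := by simp [LinearMap.pow_mulRight, hk]
  ext y
  simp [IsNilpotent.exp_eq_sum hR, IsNilpotent.exp_eq_sum hk, LinearMap.pow_mulRight, mul_sum]

theorem exp_ad_apply {a : A} (ha : IsNilpotent a) (y : A) :
    exp (ad a) y = exp a * y * exp (-a) := by
  rw [ad_eq_mulLeft_add_mulRight_neg,
    IsNilpotent.exp_add_of_commute (LinearMap.commute_mulLeft_right a (-a))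
      ((LinearMap.isNilpotent_mulLeft_iff ℚ a).2 ha)
      ((LinearMap.isNilpotent_mulRight_iff ℚ (-a)).2 ha.neg),
    exp_mulLeft ha, exp_mulRight ha.neg]
  simp [mul_assoc]

theorem exp_ad_apply_mul_exp {a : A} (ha : IsNilpotent a) (y : A) :
    exp (ad a) y * exp a = exp a * y := by
  rw [exp_ad_apply ha, mul_assoc, IsNilpotent.exp_neg_mul_exp_self ha, mul_one]

theorem exp_ad_apply_eq_sum (K : Type*) [DivisionRing K] [Module K A] {a y : A}
    (ha : IsNilpotent a) {k : ℕ} (hk : (ad a ^ k) y = 0) :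
    exp (ad a) y = ∑ n ∈ range k, ((n.factorial : K))⁻¹ • (ad a ^ n) y := by
  obtain ⟨l, hl⟩ := ha
  rw [← Module.End.smul_def, IsNilpotent.exp_smul_eq_sum hk
    ⟨2 * l + 1, ad_pow_eq_zero (pow_eq_zero_of_le (by omega) hl)⟩]
  simp [inv_natCast_smul_eq K ℚ]

end Conjugation

section Embedding

variable {K E : Type*} [CommRing K] [AddCommGroup E] [Module K E]

variable (K E) in
def embed : Module.End K E × E →ₗ[K] Module.End K (E × K) where
  toFun p := LinearMap.inl K E K ∘ₗ p.1.coprod (LinearMap.toSpanSingleton K E p.2)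
  map_add' p q := by ext <;> simp
  map_smul' c p := by ext <;> simp

@[simp]
theorem embed_apply (p : Module.End K E × E) (v : E × K) :
    embed K E p v = (p.1 v.1 + v.2 • p.2, 0) := by
  simp [embed]

theorem embed_injective : Function.Injective (embed K E) := by
  intro p q h
  have h' (v : E × K) : (embed K E p v).1 = (embed K E q v).1 := by rw [h]
  refine Prod.ext (LinearMap.ext fun e => ?_) ?_
  · simpa using h' (e, 0)
  · simpa using h' (0, 1)

theorem embed_mul (p q : Module.End K E × E) :
    embed K E p * embed K E q = embed K E (p.1 * q.1, p.1 q.2) := by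
  ext <;> simp

theorem embed_pow_succ (p : Module.End K E × E) (n : ℕ) :
    embed K E p ^ (n + 1) = embed K E (p.1 ^ (n + 1), (p.1 ^ n) p.2) := by
  induction n with
  | zero => simp
  | succ n ih => rw [pow_succ', ih, embed_mul, ← pow_succ', Module.End.pow_apply,
      Module.End.pow_apply, Function.iterate_succ_apply']

theorem embed_pow_succ_eq_zero {f : Module.End K E} (a : E) {k : ℕ} (hf : f ^ k = 0) :
    embed K E (f, a) ^ (k + 1) = 0 := by
  rw [embed_pow_succ, pow_succ, hf, zero_mul, LinearMap.zero_apply, Prod.mk_zero_zero, map_zero]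

theorem embed_mul_one_add (p r : Module.End K E × E) :
    embed K E p * (1 + embed K E r) = embed K E (p.1 + p.1 * r.1, p.2 + p.1 r.2) := by
  ext <;> simp [mul_add]

theorem one_add_mul_embed (r p : Module.End K E × E) :
    (1 + embed K E r) * embed K E p = embed K E (p.1 + r.1 * p.1, p.2 + r.1 p.2) := by
  ext <;> simp [add_mul]

theorem embed_zero_fst_mul (b : E) (p : Module.End K E × E) :
    embed K E ((0 : Module.End K E), b) * embed K E p = 0 := by
  ext <;> simp

end Embedding

section Gauge

variable {K E : Type*} [Field K] [AddCommGroup E] [Module K E]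

-- the truncated series `(e^f - 1)/f`
def expoSubOneDiv (m : ℕ) (f : Module.End K E) : Module.End K E :=
  ∑ n ∈ range m, ((n + 1).factorial : K)⁻¹ • f ^ n

theorem embed_br (p q : Module.End K E × E) :
    embed K E (br 0 1 p q) = embed K E p * embed K E q - embed K E q * embed K E p := by
  ext <;> simp [br, sgn]

theorem embed_dM (D : Module.End K E) (s : E) (p : Module.End K E × E) :
    embed K E (dM D s 0 p) = embed K E (D, s) * embed K E p - embed K E p * embed K E (D, s) := by
  ext <;> simp [dM, sgn]

theorem expo_eq_one_add_sum {m : ℕ} {f : Module.End K E} (hf : f ^ m = 0) :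
    expo m f = 1 + ∑ n ∈ range m, ((n + 1).factorial : K)⁻¹ • f ^ (n + 1) := by
  have : expo m f = expo (m + 1) f := by simp [expo, sum_range_succ _ m, hf]
  rw [this, expo, sum_range_succ']
  simp [add_comm]

variable [Algebra ℚ (Module.End K (E × K))]

theorem embed_gaugeM_add_eq_exp_ad {m : ℕ} (D : Module.End K E) (s : E)
    (p q : Module.End K E × E) (hp : IsNilpotent (embed K E p))
    (hq : (ad (embed K E p) ^ (m + 1)) (embed K E (q + (D, s))) = 0) :
    embed K E (gaugeM m D s p q + (D, s)) = exp (ad (embed K E p)) (embed K E (q + (D, s))) := by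
  have hbr : Function.Semiconj (embed K E) (br 0 1 p) (ad (embed K E p)) := fun z => by
    rw [embed_br, ad_apply]
  have hζ : embed K E (br 0 1 p q - dM D s 0 p) = ad (embed K E p) (embed K E (q + (D, s))) := by
    rw [map_sub, embed_br, embed_dM, ad_apply, map_add]
    noncomm_ring
  rw [exp_ad_apply_eq_sum K hp hq, sum_range_succ', gaugeM, map_add, map_add, map_sum]
  simp only [map_smul, (hbr.iterate_right _).eq, hζ, ← Module.End.pow_apply,
    ← Module.End.mul_apply, ← pow_succ]
  simp only [map_add, Nat.factorial_zero, Nat.cast_one, inv_one, pow_zero, one_smul,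
    Module.End.one_apply]
  abel

theorem embed_gaugeM_add_mul_exp {m : ℕ} (D : Module.End K E) (s : E)
    (p q : Module.End K E × E) (hp : IsNilpotent (embed K E p))
    (hq : (ad (embed K E p) ^ (m + 1)) (embed K E (q + (D, s))) = 0) :
    embed K E (gaugeM m D s p q + (D, s)) * exp (embed K E p)
      = exp (embed K E p) * embed K E (q + (D, s)) := by
  rw [embed_gaugeM_add_eq_exp_ad D s p q hp hq, exp_ad_apply_mul_exp hp]

theorem exp_embed {m : ℕ} {f : Module.End K E} (a : E) (hf : f ^ m = 0) :
    exp (embed K E (f, a)) = 1 + embed K E (expo m f - 1, expoSubOneDiv m f a) := by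
  rw [IsNilpotent.exp_eq_sum (embed_pow_succ_eq_zero a hf), sum_range_succ',
    expo_eq_one_add_sum hf, add_sub_cancel_left, expoSubOneDiv]
  simp only [embed_pow_succ, Nat.factorial_zero, Nat.cast_one, inv_one, pow_zero, one_smul,
    inv_natCast_smul_eq ℚ K, ← map_smul, ← map_sum]
  rw [add_comm]
  congr 2
  ext <;> simp [Prod.fst_sum, Prod.snd_sum]

theorem ad_embed_zero_fst_sq_apply (b : E) (p : Module.End K E × E) :
    (ad (embed K E ((0 : Module.End K E), b)) ^ 2) (embed K E p) = 0 := by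
  set Q := embed K E ((0 : Module.End K E), b)
  have hQY : Q * embed K E p = 0 := embed_zero_fst_mul b p
  have hQQ : Q * Q = 0 := embed_zero_fst_mul b _
  rw [sq, Module.End.mul_apply, ad_apply, ad_apply, hQY, mul_sub, sub_mul, ← mul_assoc, hQY,
    mul_assoc, hQQ]
  simp

theorem gaugeM_conj_expo {k m : ℕ} (D : Module.End K E) (s : E) (f : Module.End K E) (a : E)
    (x : Module.End K E) (y : E) (hf : f ^ k = 0)
    (hq : (ad (embed K E (f, a)) ^ (m + 1)) (embed K E ((x, y) + (D, s))) = 0) :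
    ((gaugeM m D s (f, a) (x, y)).1 + D) * expo k f = expo k f * (x + D) ∧
      (gaugeM m D s (f, a) (x, y)).2 + s
        + ((gaugeM m D s (f, a) (x, y)).1 + D) (expoSubOneDiv k f a) = expo k f (y + s) := by
  have h := embed_gaugeM_add_mul_exp D s (f, a) (x, y) ⟨_, embed_pow_succ_eq_zero a hf⟩ hq
  rw [exp_embed a hf, embed_mul_one_add, one_add_mul_embed] at h
  obtain ⟨h₁, h₂⟩ := Prod.ext_iff.1 (embed_injective h)
  refine ⟨?_, ?_⟩
  · simpa [mul_sub, sub_mul] using h₁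
  · simpa using h₂

end Gauge

section GaugeFormulas

variable {K E : Type*} [Field K] [CharZero K] [AddCommGroup E] [Module K E]

theorem gaugeM_zero_fst {m : ℕ} (hm : 1 ≤ m) (D : Module.End K E) (s b : E)
    (x : Module.End K E) (y : E) :
    gaugeM m D s ((0 : Module.End K E), b) (x, y) = (x, y - (D + x) b) := by
  let _ : Algebra ℚ (Module.End K (E × K)) := Algebra.compHom _ (algebraMap ℚ K)
  obtain ⟨h₁, h₂⟩ := gaugeM_conj_expo D s 0 b x y (pow_one _)
    (Module.End.pow_map_zero_of_le (k := 2) (l := m + 1) (by omega)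
      (ad_embed_zero_fst_sq_apply _ _))
  simp only [expo, expoSubOneDiv, range_one, sum_singleton, Nat.factorial_zero,
    zero_add, Nat.factorial_one, Nat.cast_one, inv_one, pow_zero, one_smul, mul_one, one_mul,
    Module.End.one_apply, LinearMap.add_apply, add_left_inj] at h₁ h₂
  refine Prod.ext h₁ ?_
  rw [h₁] at h₂
  dsimp only
  rw [LinearMap.add_apply, eq_sub_iff_add_eq]
  apply add_right_cancel (b := s)
  rw [← h₂]
  abel

theorem add_snd_gaugeM_add_apply_eq_expo (D : Module.End K E) (s : E) (u f : Module.End K E)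
    (a t : E) {N m : ℕ} (hf : f ^ N = 0) (hm : 2 * N + 1 ≤ m) :
    s + (gaugeM m D s (f, a) (u, t)).2 + (D + (gaugeM m D s (f, a) (u, t)).1) (expoSubOneDiv m f a)
      = expo m f (s + t) := by
  let _ : Algebra ℚ (Module.End K (E × K)) := Algebra.compHom _ (algebraMap ℚ K)
  have hq := Module.End.pow_map_zero_of_le (l := m + 1) (by omega)
    (LinearMap.congr_fun (ad_pow_eq_zero (embed_pow_succ_eq_zero a hf))
      (embed K E ((u, t) + (D, s))))
  have h := (gaugeM_conj_expo D s f a u t (pow_eq_zero_of_le (show N ≤ m by omega) hf) hq).2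
  rwa [add_comm s, add_comm s, add_comm D]

end GaugeFormulas

theorem stmt_11_general (D : Module.End K E) (s : E)
    (u f : Module.End K E) (a t : E)
    (N : ℕ) (hf : f ^ N = 0)
    (m : ℕ) (hm : 2 * N + 1 ≤ m)
    (u' : Module.End K E) (t' : E)
    (hg : (u', t') = gaugeM m D s (f, a) (u, t)) :
    -- `s + t'` and `e^f(s+t)` have the same class in `H^0(E^* ⊗ A, ∂ + u')`
    ((s + t') - expo m f (s + t) ∈ Set.range (D + u')) ∧
    -- there is `b` with `e^{(0,b)} e^{(f,a)} ∗ (u,t) = (u', e^f(s+t) − s)`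
    (∃ b : E, gaugeM m D s ((0 : Module.End K E), b) (u', t')
        = (u', expo m f (s + t) - s)) := by
  have key := add_snd_gaugeM_add_apply_eq_expo D s u f a t hf hm
  rw [← hg] at key
  dsimp only at key
  refine ⟨⟨-expoSubOneDiv m f a, by rw [map_neg, ← key]; abel⟩, -expoSubOneDiv m f a, ?_⟩
  rw [gaugeM_zero_fst (by omega), map_neg, sub_neg_eq_add, ← key]
  congr 1
  abel

theorem stmt_11 (D : Module.End K E) (s : E) (hD : D * D = 0) (hs : D s = 0)
    (u f : Module.End K E) (a t : E)
    (hMC : (D + u) * (D + u) = 0)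
    (N : ℕ) (hf : f ^ N = 0)
    (m : ℕ) (hm : 2 * N + 1 ≤ m)
    (u' : Module.End K E) (t' : E)
    (hg : (u', t') = gaugeM m D s (f, a) (u, t)) :
    -- `s + t'` and `e^f(s+t)` have the same class in `H^0(E^* ⊗ A, ∂ + u')`
    ((s + t') - expo m f (s + t) ∈ Set.range (D + u')) ∧
    -- there is `b` with `e^{(0,b)} e^{(f,a)} ∗ (u,t) = (u', e^f(s+t) − s)`
    (∃ b : E, gaugeM m D s ((0 : Module.End K E), b) (u', t')
        = (u', expo m f (s + t) - s)) :=
  stmt_11_general D s u f a t N hf m hm u' t' hg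

end Stmt11
end

section
/- Let X = ℂ (or K), Z = {t=0}, and consider the two-term complex K[t]∂_t → K given by γ(p(t)∂_t) = p(0), with K[t]∂_t in degree 0 carrying the Lie bracket of vector fields [p∂_t, q∂_t] = (pq' − qp')∂_t. Then there is no DG-Lie algebra structure on the complex K[t]∂_t ⊕ K (degree 0 and 1) whose degree-zero bracket is the vector field bracket and whose differential is γ. That is, there is no bilinear bracket [−,−]: K[t]∂_t × K → K satisfying the Leibniz rule γ[χ,η] = [γχ, η] + [χ, γη] (with the degree-1 part abelian) and the graded Jacobi identity together with the vector field bracket. -/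
/-!
STATEMENT 12. Let `X = 𝔸¹` with coordinate `t` and `Z = {t = 0}`; consider the two-term
complex `K[t]∂_t → K`, `γ(p∂_t) = p(0)`, with `K[t]∂_t` in degree 0 carrying the bracket
of vector fields `[p∂_t, q∂_t] = (pq' − qp')∂_t`.  There is no DG-Lie algebra structure on
this complex whose degree-zero bracket is the vector field bracket and whose differential is
`γ`: there is no bilinear pairing `B : K[t]∂_t × K → K` (the bracket of a degree-0 with a
degree-1 element; the degree-1 part is abelian) satisfying the Leibniz rule for the
differential, `γ[χ,ψ] = [γχ, ψ] + [χ, γψ]` (where by graded antisymmetry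
`[a, ψ] = −[ψ, a] = −B ψ a` for `a` of degree 1), and the graded Jacobi identity
`[[χ,ψ],a] = [χ,[ψ,a]] − [ψ,[χ,a]]`.

Vector fields `p∂_t` are represented by their coefficient `p : Polynomial K`;
the vector field bracket is `p·q' − q·p'`, and `γ p = p.eval 0`.
-/

open Polynomial in
theorem stmt_12 {K : Type*} [Field K] [CharZero K] :
    ¬ ∃ B : Polynomial K → K → K,
      -- B is bilinear
      (∀ p q a, B (p + q) a = B p a + B q a) ∧
      (∀ p a b, B p (a + b) = B p a + B p b) ∧
      (∀ (c : K) p a, B (c • p) a = c * B p a) ∧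
      (∀ (c : K) p a, B p (c * a) = c * B p a) ∧
      -- Leibniz rule for the differential: γ[χ,ψ] = [γχ,ψ] + [χ,γψ] = −B ψ (γχ) + B χ (γψ)
      (∀ p q : Polynomial K,
        (p * derivative q - q * derivative p).eval 0
          = - B q (p.eval 0) + B p (q.eval 0)) ∧
      -- graded Jacobi identity: [[χ,ψ],a] = [χ,[ψ,a]] − [ψ,[χ,a]]
      (∀ (p q : Polynomial K) (a : K),
        B (p * derivative q - q * derivative p) a = B p (B q a) - B q (B p a)) := by
  rintro ⟨B, _hadd1, _hadd2, hsmul1, hsmul2, hL, hJ⟩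
  have hzero : ∀ p : Polynomial K, B p 0 = 0 := by
    intro p
    have := hsmul2 0 p 0
    simpa using this
  have hX : B X 1 = -1 := by
    have h := hL 1 X
    simp [hzero] at h
    linear_combination h
  have key : B X 1 = 0 := by
    have h := hJ 1 (X ^ 2) 1
    have hb : (1 * derivative (X ^ 2) - X ^ 2 * derivative 1 : Polynomial K)
        = (2 : K) • X := by
      simp [derivative_X_pow, smul_eq_C_mul]
      rw [← C_1, ← C_add]; norm_num
    rw [hb, hsmul1] at h
    have h1 : B 1 (B (X ^ 2) 1) = B (X ^ 2) 1 * B 1 1 := by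
      have := hsmul2 (B (X ^ 2) 1) 1 1
      simpa using this
    have h2 : B (X ^ 2) (B 1 1) = B 1 1 * B (X ^ 2) 1 := by
      have := hsmul2 (B 1 1) (X ^ 2) 1
      simpa using this
    rw [h1, h2] at h
    have h0 : (2 : K) * B X 1 = 0 := by rw [h]; ring
    have h2ne : (2 : K) ≠ 0 := two_ne_zero
    exact (mul_eq_zero.mp h0).resolve_left h2ne
  rw [hX] at key
  exact absurd key (by norm_num)
end

section
/- In the setting of the previous statement, any putative bracket [−,−]: K[t]∂_t × K → K satisfying Leibniz and Jacobi must satisfy: [t^n∂_t, a] = 0 for all n ≥ 2 and all a ∈ K, [t∂_t, a] = −a, and [∂_t, a] = 0. These conditions are inconsistent with the Jacobi identity applied to [∂_t, t^2∂_t] = 2t∂_t, since it would give −2a = [2t∂_t, a] = [∂_t,[t^2∂_t,a]] − [t^2∂_t,[∂_t,a]] = 0 for every a, a contradiction when a ≠ 0. -/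
/-!
STATEMENT 13. In the setting of the previous statement, any putative bracket
`B : K[t]∂_t × K → K` satisfying the Leibniz rule for the differential and the graded Jacobi
identity must satisfy `[t^n∂_t, a] = 0` for all `n ≥ 2` and all `a`, `[t∂_t, a] = −a`, and
`[∂_t, a] = 0`.  These conditions are inconsistent with the Jacobi identity applied to
`[∂_t, t²∂_t] = 2t∂_t`, which would give `−2a = [2t∂_t, a] = [∂_t,[t²∂_t,a]] −
[t²∂_t,[∂_t,a]] = 0` for every `a` — a contradiction when `a ≠ 0`.  Hence such hypotheses
lead to `False`.

Conventions as in the previous file: vector fields `p∂_t` are represented by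
`p : Polynomial K`, the bracket is `p·q' − q·p'`, the differential is `γ p = p.eval 0`, and
by graded antisymmetry `[a, ψ] = −B ψ a` for `a` of degree 1.
-/

open Polynomial in
theorem stmt_13 {K : Type*} [Field K] [CharZero K]
    (B : Polynomial K → K → K)
    -- B is bilinear
    (haddL : ∀ p q a, B (p + q) a = B p a + B q a)
    (haddR : ∀ p a b, B p (a + b) = B p a + B p b)
    (hsmulL : ∀ (c : K) p a, B (c • p) a = c * B p a)
    (hsmulR : ∀ (c : K) p a, B p (c * a) = c * B p a)
    -- Leibniz rule for the differential
    (hleib : ∀ p q : Polynomial K,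
      (p * derivative q - q * derivative p).eval 0
        = - B q (p.eval 0) + B p (q.eval 0))
    -- graded Jacobi identity
    (hjac : ∀ (p q : Polynomial K) (a : K),
      B (p * derivative q - q * derivative p) a = B p (B q a) - B q (B p a)) :
    (∀ n : ℕ, 2 ≤ n → ∀ a : K, B (X ^ n) a = 0) ∧
    (∀ a : K, B X a = -a) ∧
    (∀ a : K, B 1 a = 0) ∧
    False := by
  -- B p 0 = 0
  have h0 : ∀ p : Polynomial K, B p 0 = 0 := fun p => by
    have := hsmulR 0 p 0; simpa using this
  -- B X 1 = -1
  have hX1 : B X 1 = -1 := by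
    have := hleib X 1
    simp [h0] at this
    exact this.symm
  -- B X a = -a
  have hX : ∀ a : K, B X a = -a := fun a => by
    have := hsmulR a X 1
    rw [mul_one, hX1] at this
    simpa using this
  -- B (X^n) a = 0 for n ≥ 2
  have hXn : ∀ n : ℕ, 2 ≤ n → ∀ a : K, B (X ^ n) a = 0 := by
    intro n hn a
    have h1 : B (X ^ n) 1 = 0 := by
      have := hleib (X ^ n) 1
      simp [h0] at this
      rcases Nat.exists_eq_add_of_le hn with ⟨k, rfl⟩
      simp at this
      rw [h0] at this
      have hd : eval 0 (derivative (X ^ (2 + k) : K[X])) = 0 := by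
        rw [show 2 + k = (k + 1) + 1 by omega, derivative_X_pow]; simp
      simpa [hd] using this.symm
    have := hsmulR a (X ^ n) 1
    rw [mul_one, h1, mul_zero] at this
    exact this
  -- B 1 a = 0 via Jacobi with p = 1, q = X
  have h1a : ∀ a : K, B 1 a = 0 := by
    intro a
    have hj := hjac 1 X a
    simp only [derivative_X, derivative_one, mul_one, mul_zero, sub_zero] at hj
    rw [hX a] at hj
    have hneg : B 1 (-a) = - B 1 a := by
      have := hsmulR (-1) 1 a; simpa using this
    have hX' : B X (B 1 a) = -(B 1 a) := hX _
    rw [hneg, hX'] at hj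
    simpa using hj
  refine ⟨hXn, hX, h1a, ?_⟩
  -- Jacobi with p = 1, q = X^2
  have hj := hjac 1 (X ^ 2) 1
  have hder : (1 : Polynomial K) * derivative (X ^ 2) - X ^ 2 * derivative 1
      = (2 : K) • X := by
    simp [derivative_X_pow, smul_eq_C_mul]
    rw [one_add_one_eq_two, map_ofNat]
  simp only [hder, hsmulL, hX1, hXn 2 le_rfl, h1a] at hj
  norm_num at hj
end

section
/- Let R be a commutative K-algebra, E^* a bounded-above complex of R-modules concentrated in nonpositive degrees, s ∈ E^0, and r ∈ E^{-1}. Then the map (u,x) ↦ (u, x − u(r)) (matching the formula (u,x) ↦ (u, x − [r,u]) up to sign conventions) defines an isomorphism of DG-Lie algebras from the cocone algebra M_s (built from evaluation at s) to the cocone algebra M_{s+∂r} (built from evaluation at s + ∂r): it is bijective, commutes with brackets, and intertwines the differentials d_s(f,v) = ([∂,f], ∂v − (−1)^{|f|}f(s)) and d_{s+∂r}(f,v) = ([∂,f], ∂v − (−1)^{|f|}f(s+∂r)). -/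
/-!
STATEMENT 14. Let `R` be a commutative `K`-algebra, `E^*` a bounded-above complex of
`R`-modules concentrated in nonpositive degrees, `s ∈ E^0`, `r ∈ E^{-1}`.  Then the map
`(u,x) ↦ (u, x − [r,u])` defines an isomorphism of DG-Lie algebras from the cocone algebra
`M_s` (built from evaluation at `s`) to the cocone algebra `M_{s+∂r}` (built from evaluation
at `s + ∂r`): it is bijective, commutes with brackets, and intertwines the differentials
`d_s(f,v) = ([∂,f], ∂v − (−1)^{|f|}f(s))` and `d_{s+∂r}(f,v) = ([∂,f], ∂v − (−1)^{|f|}f(s+∂r))`.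

Model as elsewhere: `M = End_R(E) × E`, degrees entering only through signs.  In our sign
conventions the element `[r,u]` (bracket of the degree-0 element `(0,r)` with `(u,x)`) has
second component `−u(r)`, so the map `(u,x) ↦ (u, x − [r,u])` reads `Ψ(u,x) = (u, x + u(r))`
(this is the statement's formula "`(u, x − u(r))` up to sign conventions").
-/

namespace Stmt14

/-- The sign `(-1)^n` for `n : ℤ`. -/
def sgn (n : ℤ) : ℤ := if Even n then 1 else -1

variable {R E : Type*} [CommRing R] [AddCommGroup E] [Module R E]

/-- Bracket of `M = End(E) ⊕ E[-1]` (degree tags `a`, `b`); it does not depend on `s`. -/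
def br (a b : ℤ) (p q : Module.End R E × E) : Module.End R E × E :=
  (p.1 * q.1 - sgn (a * b) • (q.1 * p.1), p.1 q.2 - sgn (a * b) • q.1 p.2)

/-- Differential of the cocone `M_s` on elements of degree `a`. -/
def dM (D : Module.End R E) (s : E) (a : ℤ) (p : Module.End R E × E) :
    Module.End R E × E :=
  (D * p.1 - sgn a • (p.1 * D), D p.2 - sgn a • p.1 s)

/-- The map `(u,x) ↦ (u, x − [r,u]) = (u, x + u(r))` from `M_s` to `M_{s+∂r}`. -/
def Ψ (r : E) (p : Module.End R E × E) : Module.End R E × E :=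
  (p.1, p.2 + p.1 r)

theorem stmt_14 (D : Module.End R E) (s : E) (hD : D * D = 0) (hs : D s = 0) (r : E) :
    -- bijective
    Function.Bijective (Ψ r : Module.End R E × E → Module.End R E × E) ∧
    -- commutes with the brackets
    (∀ (a b : ℤ) (p q : Module.End R E × E),
      Ψ r (br a b p q) = br a b (Ψ r p) (Ψ r q)) ∧
    -- intertwines the differentials `d_s` of `M_s` and `d_{s+∂r}` of `M_{s+∂r}`
    (∀ (a : ℤ) (p : Module.End R E × E),
      dM D (s + D r) a (Ψ r p) = Ψ r (dM D s a p)) := by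
  refine ⟨⟨fun p q h => ?_, fun p => ⟨(p.1, p.2 - p.1 r), ?_⟩⟩, ?_, ?_⟩
  · simp only [Ψ, Prod.mk.injEq] at h
    obtain ⟨h1, h2⟩ := h
    rw [h1] at h2
    exact Prod.ext h1 (by simpa using h2)
  · simp [Ψ]
  · intro a b p q
    simp only [Ψ, br, Prod.mk.injEq, LinearMap.sub_apply, LinearMap.smul_apply,
      Module.End.mul_apply, map_sub, map_add, map_smul, smul_sub]
    exact ⟨trivial, by rw [smul_add]; abel⟩
  · intro a p
    simp only [Ψ, dM, Prod.mk.injEq, LinearMap.sub_apply, LinearMap.smul_apply,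
      Module.End.mul_apply, map_add, map_smul, smul_add]
    exact ⟨trivial, by abel⟩

end Stmt14
end

section
/- Let 0 → E^{-m} → ⋯ → E^{-1} → E^0 → F → 0 be an exact complex of R-modules (a resolution of F) and let u ∈ Hom^1_R(E^*,E^*) ⊗ m_A, for A a local Artinian K-algebra with maximal ideal m_A, be such that (∂+u)^2 = 0. Then the perturbed complex 0 → E^{-m} ⊗ A → ⋯ → E^{-1} ⊗ A → E^0 ⊗ A with differential ∂ + u is exact in all negative degrees. -/
open LinearMap

open LinearMap

theorem exists_homotopy {K : Type*} [Field K] (E : ℕ → Type*) [∀ n, AddCommGroup (E n)]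
    [∀ n, Module K (E n)] (d : ∀ n, E (n + 1) →ₗ[K] E n)
    (hex : ∀ n, LinearMap.range (d (n + 1)) = LinearMap.ker (d n)) :
    ∃ h : ∀ n, E n →ₗ[K] E (n + 1),
      ∀ n (x : E (n + 1)), d (n + 1) (h (n + 1) x) + h n (d n x) = x := by
  classical
  choose C hC using fun n => Submodule.exists_isCompl (LinearMap.ker (d n))
  obtain ⟨W, hW⟩ := Submodule.exists_isCompl (LinearMap.range (d 0))
  set dC : ∀ n, C n →ₗ[K] E n := fun n => (d n).comp (C n).subtype with hdC
  have hinj : ∀ n, Function.Injective (dC n) := by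
    intro n a b hab
    have h1 : (a : E (n+1)) - b ∈ LinearMap.ker (d n) := by
      simp only [LinearMap.mem_ker, map_sub]
      simpa [dC, sub_eq_zero] using hab
    have h2 : (a : E (n+1)) - b ∈ C n := sub_mem a.2 b.2
    have := (hC n).disjoint.le_bot (Submodule.mem_inf.mpr ⟨h1, h2⟩)
    ext
    simpa [sub_eq_zero] using this
  have hrange : ∀ n, LinearMap.range (dC n) = LinearMap.range (d n) := by
    intro n
    apply le_antisymm
    · rintro _ ⟨c, rfl⟩; exact ⟨c, rfl⟩
    · rintro _ ⟨x, rfl⟩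
      have hx : x ∈ LinearMap.ker (d n) ⊔ C n := by rw [(hC n).sup_eq_top]; trivial
      obtain ⟨a, ha, b, hb, rfl⟩ := Submodule.mem_sup.mp hx
      refine ⟨⟨b, hb⟩, ?_⟩
      simp [dC, ha, LinearMap.mem_ker.mp ha]
  set g : ∀ n, LinearMap.range (d n) →ₗ[K] E (n + 1) := fun n =>
    (C n).subtype.comp (((LinearEquiv.ofInjective (dC n) (hinj n)).symm.toLinearMap).comp
      (LinearEquiv.ofEq _ _ (hrange n).symm).toLinearMap) with hg
  have g1 : ∀ n (z : LinearMap.range (d n)), d n (g n z) = z := by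
    intro n z
    simp only [hg, LinearMap.comp_apply, Submodule.coe_subtype, LinearEquiv.coe_coe]
    have : ∀ c : C n, d n (c : E (n+1)) = dC n c := fun c => rfl
    rw [this, LinearEquiv.ofInjective_symm_apply]
    rfl
  have g2 : ∀ n (z : LinearMap.range (d n)), g n z ∈ C n := by
    intro n z
    simp only [hg, LinearMap.comp_apply, Submodule.coe_subtype]
    exact Submodule.coe_mem _
  have hCinj : ∀ n ⦃a b : E (n + 1)⦄, a ∈ C n → b ∈ C n → d n a = d n b → a = b := by
    intro n a b ha hb hab
    have : dC n ⟨a, ha⟩ = dC n ⟨b, hb⟩ := by simpa [dC] using hab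
    exact congrArg Subtype.val (hinj n this)
  set π : ∀ n, E (n + 1) →ₗ[K] LinearMap.ker (d n) := fun n =>
    Submodule.linearProjOfIsCompl _ _ (hC n) with hπ
  set π0 : E 0 →ₗ[K] LinearMap.range (d 0) := Submodule.linearProjOfIsCompl _ _ hW with hπ0
  have hsub : ∀ n (x : E (n + 1)), x - ↑(π n x) ∈ C n := by
    intro n x
    have hx : x ∈ LinearMap.ker (d n) ⊔ C n := by rw [(hC n).sup_eq_top]; trivial
    obtain ⟨a, ha, b, hb, hab⟩ := Submodule.mem_sup.mp hx
    have h1 : π n x = ⟨a, ha⟩ := by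
      rw [← hab, map_add]
      have e1 : π n a = ⟨a, ha⟩ := Submodule.linearProjOfIsCompl_apply_left (hC n) ⟨a, ha⟩
      have e2 : π n b = 0 := Submodule.linearProjOfIsCompl_apply_right (hC n) ⟨b, hb⟩
      rw [e1, e2, add_zero]
    rw [h1]
    simpa [← hab] using hb
  set h : ∀ n, E n →ₗ[K] E (n + 1) := fun n =>
    Nat.casesOn n ((g 0).comp π0) (fun m => (g (m + 1)).comp
      ((LinearEquiv.ofEq _ _ (hex m).symm).toLinearMap.comp (π m))) with hh
  refine ⟨h, fun n x => ?_⟩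
  have e1 : d (n + 1) (h (n + 1) x) = ↑(π n x) := by
    show d (n + 1) (g (n + 1) ((LinearEquiv.ofEq _ _ (hex n).symm) (π n x))) = _
    rw [g1]
    rfl
  have e2 : h n (d n x) = x - ↑(π n x) := by
    have key : h n (d n x) ∈ C n ∧ d n (h n (d n x)) = d n x := by
      cases n with
      | zero =>
        have hm : d 0 x ∈ LinearMap.range (d 0) := ⟨x, rfl⟩
        have hp : π0 (d 0 x) = ⟨d 0 x, hm⟩ :=
          Submodule.linearProjOfIsCompl_apply_left hW ⟨d 0 x, hm⟩
        constructor
        · show g 0 (π0 (d 0 x)) ∈ C 0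
          exact g2 0 _
        · show d 0 (g 0 (π0 (d 0 x))) = d 0 x
          rw [hp, g1]
      | succ m =>
        have hm : d (m + 1) x ∈ LinearMap.ker (d m) := (hex m) ▸ ⟨x, rfl⟩
        have hp : π m (d (m + 1) x) = ⟨d (m + 1) x, hm⟩ :=
          Submodule.linearProjOfIsCompl_apply_left (hC m) ⟨d (m + 1) x, hm⟩
        constructor
        · show g (m + 1) _ ∈ C (m + 1)
          exact g2 (m + 1) _
        · show d (m + 1) (g (m + 1) ((LinearEquiv.ofEq _ _ (hex m).symm) (π m (d (m + 1) x))))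
              = d (m + 1) x
          rw [hp, g1]
          rfl
    refine hCinj n key.1 (hsub n x) ?_
    rw [key.2, map_sub]
    have : d n ↑(π n x) = 0 := (π n x).2
    rw [this, sub_zero]
  rw [e1, e2]
  abel


theorem mem_smul_top_map {A M N : Type*} [CommRing A] [AddCommGroup M] [Module A M]
    [AddCommGroup N] [Module A N] (f : M →ₗ[A] N) (J : Ideal A) {x : M}
    (hx : x ∈ J • (⊤ : Submodule A M)) : f x ∈ J • (⊤ : Submodule A N) := by
  refine Submodule.smul_induction_on hx (fun r hr m _ => ?_) (fun a b ha hb => ?_)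
  · rw [map_smul]; exact Submodule.smul_mem_smul hr trivial
  · rw [map_add]; exact Submodule.add_mem _ ha hb

theorem mem_smul_top_step {A M N : Type*} [CommRing A] [AddCommGroup M] [Module A M]
    [AddCommGroup N] [Module A N] (f : M →ₗ[A] N) (J : Ideal A)
    (hf : ∀ x, f x ∈ J • (⊤ : Submodule A N)) (a : ℕ) {x : M}
    (hx : x ∈ J ^ a • (⊤ : Submodule A M)) : f x ∈ J ^ (a + 1) • (⊤ : Submodule A N) := by
  have heq : J ^ (a + 1) • (⊤ : Submodule A N) = J ^ a • (J • (⊤ : Submodule A N)) := by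
    rw [pow_succ, ← Submodule.smul_assoc, Ideal.smul_eq_mul]
  rw [heq]
  refine Submodule.smul_induction_on hx (fun r hr m _ => ?_) (fun y z hy hz => ?_)
  · rw [map_smul]; exact Submodule.smul_mem_smul hr (hf m)
  · rw [map_add]; exact Submodule.add_mem _ hy hz

open TensorProduct

theorem key_lemma {K A : Type*} [Field K] [CommRing A] [Algebra K A]
    (E : ℕ → Type*) [∀ n, AddCommGroup (E n)] [∀ n, Module K (E n)]
    (dK : ∀ n, E (n + 1) →ₗ[K] E n)
    (hexK : ∀ n, LinearMap.range (dK (n + 1)) = LinearMap.ker (dK n))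
    (I : Ideal A) (N : ℕ) (hN : I ^ N = 0)
    (u : ∀ n, (A ⊗[K] E (n + 1)) →ₗ[A] (A ⊗[K] E n))
    (hu : ∀ n, LinearMap.range (u n) ≤ I • (⊤ : Submodule A (A ⊗[K] E n)))
    (hsq : ∀ n, (LinearMap.baseChange A (dK n) + u n).comp
        (LinearMap.baseChange A (dK (n + 1)) + u (n + 1)) = 0) :
    ∀ n, LinearMap.range (LinearMap.baseChange A (dK (n + 1)) + u (n + 1))
        = LinearMap.ker (LinearMap.baseChange A (dK n) + u n) := by
  classical
  obtain ⟨h, hh⟩ := exists_homotopy E dK hexK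
  set H : ∀ n, (A ⊗[K] E n) →ₗ[A] (A ⊗[K] E (n + 1)) := fun n =>
    LinearMap.baseChange A (h n) with hH
  have hhtp : ∀ n (x : A ⊗[K] E (n + 1)),
      LinearMap.baseChange A (dK (n + 1)) (H (n + 1) x) + H n (LinearMap.baseChange A (dK n) x)
        = x := by
    intro n x
    have hid : ((dK (n + 1)).comp (h (n + 1)) + (h n).comp (dK n)) = LinearMap.id := by
      ext y; simpa using hh n y
    have hb := congrArg (LinearMap.baseChange A) hid
    rw [LinearMap.baseChange_add, LinearMap.baseChange_comp, LinearMap.baseChange_comp,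
      LinearMap.baseChange_id] at hb
    have := LinearMap.ext_iff.mp hb x
    simpa using this
  have husmul : ∀ n (y : A ⊗[K] E (n + 1)), u n y ∈ I • (⊤ : Submodule A (A ⊗[K] E n)) :=
    fun n y => hu n ⟨y, rfl⟩
  intro n
  apply le_antisymm
  · rintro _ ⟨y, rfl⟩
    rw [LinearMap.mem_ker, ← LinearMap.comp_apply, hsq n, LinearMap.zero_apply]
  · intro x hx
    rw [LinearMap.mem_ker] at hx
    have key : ∀ t : ℕ, ∀ x : A ⊗[K] E (n + 1),
        (LinearMap.baseChange A (dK n) + u n) x = 0 →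
        x ∈ I ^ (N - t) • (⊤ : Submodule A (A ⊗[K] E (n + 1))) →
        x ∈ LinearMap.range (LinearMap.baseChange A (dK (n + 1)) + u (n + 1)) := by
      intro t
      induction t with
      | zero =>
        intro x hx hmem
        rw [Nat.sub_zero, hN, Submodule.zero_eq_bot, Submodule.bot_smul, Submodule.mem_bot]
          at hmem
        rw [hmem]
        exact zero_mem _
      | succ t ih =>
        intro x hx hmem
        set a := N - (t + 1) with ha
        have h1 : LinearMap.baseChange A (dK n) x = - u n x := by
          rw [LinearMap.add_apply] at hx
          exact eq_neg_of_add_eq_zero_left hx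
        have e : x - (LinearMap.baseChange A (dK (n + 1)) + u (n + 1)) (H (n + 1) x)
            = -(H n (u n x)) - u (n + 1) (H (n + 1) x) := by
          rw [LinearMap.add_apply]
          calc x - (LinearMap.baseChange A (dK (n + 1)) (H (n + 1) x) + u (n + 1) (H (n + 1) x))
              = (LinearMap.baseChange A (dK (n + 1)) (H (n + 1) x)
                  + H n (LinearMap.baseChange A (dK n) x))
                - (LinearMap.baseChange A (dK (n + 1)) (H (n + 1) x)
                  + u (n + 1) (H (n + 1) x)) := by rw [hhtp n x]
            _ = H n (LinearMap.baseChange A (dK n) x) - u (n + 1) (H (n + 1) x) := by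
                rw [add_sub_add_left_eq_sub]
            _ = -(H n (u n x)) - u (n + 1) (H (n + 1) x) := by rw [h1, map_neg]
        have hx1mem : x - (LinearMap.baseChange A (dK (n + 1)) + u (n + 1)) (H (n + 1) x)
            ∈ I ^ (a + 1) • (⊤ : Submodule A (A ⊗[K] E (n + 1))) := by
          rw [e]
          have m1 := mem_smul_top_map (H n) (I ^ (a + 1))
            (mem_smul_top_step (u n) I (husmul n) a hmem)
          have m2 := mem_smul_top_step (u (n + 1)) I (husmul (n + 1)) a
            (mem_smul_top_map (H (n + 1)) (I ^ a) hmem)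
          exact sub_mem (neg_mem m1) m2
        have hmem' : x - (LinearMap.baseChange A (dK (n + 1)) + u (n + 1)) (H (n + 1) x)
            ∈ I ^ (N - t) • (⊤ : Submodule A (A ⊗[K] E (n + 1))) :=
          Submodule.smul_mono_left (Ideal.pow_le_pow_right (by omega)) hx1mem
        have hD1 : (LinearMap.baseChange A (dK n) + u n)
            (x - (LinearMap.baseChange A (dK (n + 1)) + u (n + 1)) (H (n + 1) x)) = 0 := by
          rw [map_sub, hx, zero_sub, neg_eq_zero, ← LinearMap.comp_apply, hsq n,
            LinearMap.zero_apply]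
        obtain ⟨y, hy⟩ := ih _ hD1 hmem'
        exact ⟨y + H (n + 1) x, by rw [map_add, hy]; abel⟩
    refine key N x hx ?_
    rw [Nat.sub_self, pow_zero, Ideal.one_eq_top, Submodule.top_smul]
    trivial


open TensorProduct in
theorem stmt_16 {K R A : Type*} [Field K] [CharZero K]
    [CommRing R] [Algebra K R]
    [CommRing A] [Algebra K A] [IsArtinianRing A] [IsLocalRing A]
    (E : ℕ → Type*) [∀ n, AddCommGroup (E n)] [∀ n, Module R (E n)]
    [∀ n, Module K (E n)] [∀ n, IsScalarTower K R (E n)]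
    (m : ℕ) (hbd : ∀ n, m < n → Subsingleton (E n))
    (d : ∀ n, E (n + 1) →ₗ[R] E n)
    (hexact : ∀ n, LinearMap.range (d (n + 1)) = LinearMap.ker (d n))
    (u : ∀ n, (A ⊗[K] E (n + 1)) →ₗ[A] (A ⊗[K] E n))
    (hu : ∀ n, LinearMap.range (u n) ≤
      (IsLocalRing.maximalIdeal A) • (⊤ : Submodule A (A ⊗[K] E n)))
    (hsq : ∀ n,
      (LinearMap.baseChange A ((d n).restrictScalars K) + u n).comp
        (LinearMap.baseChange A ((d (n + 1)).restrictScalars K) + u (n + 1)) = 0) :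
    ∀ n, LinearMap.range (LinearMap.baseChange A ((d (n + 1)).restrictScalars K) + u (n + 1))
        = LinearMap.ker (LinearMap.baseChange A ((d n).restrictScalars K) + u n) := by
  classical
  have hexK : ∀ n, LinearMap.range ((fun n => (d n).restrictScalars K) (n + 1))
      = LinearMap.ker ((fun n => (d n).restrictScalars K) n) := by
    intro n
    ext x
    simp only [LinearMap.mem_range, LinearMap.mem_ker, LinearMap.restrictScalars_apply]
    constructor
    · rintro ⟨y, rfl⟩
      exact LinearMap.mem_ker.mp ((hexact n).le ⟨y, rfl⟩)
    · intro hx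
      obtain ⟨y, hy⟩ := (hexact n).ge (LinearMap.mem_ker.mpr hx)
      exact ⟨y, hy⟩
  obtain ⟨N, hN⟩ : ∃ N, (IsLocalRing.maximalIdeal A) ^ N = 0 := by
    have h1 := IsArtinianRing.isNilpotent_jacobson_bot (R := A)
    rw [IsLocalRing.jacobson_eq_maximalIdeal ⊥ bot_ne_top] at h1
    exact h1
  exact key_lemma E (fun n => (d n).restrictScalars K) hexK
    (IsLocalRing.maximalIdeal A) N hN u hu hsq
end
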